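/- Let (M,η,g,ξ,φ) be a K-contact manifold of dimension 2m+1 (h = 0), and G a Riemannian g-natural metric on TM. Then the X-harmonicity condition (2m)(α₁+α₁')(1)·(tr h² + 2m)/(2m) + [2m(α₁+α₃)+φ₁+φ₃]'(1) = 0 reduces, since tr h² = 0, to 2m(α₁+α₁')(1) + [2m(α₁+α₃)+φ₁+φ₃]'(1) = 0; in particular for the Sasaki metric (α₁ = 1, α₂ = α₃ = β₁ = β₂ = β₃ = 0) the left-hand side equals 2m ≠ 0, so the Reeb vector field of a K-contact manifold is never X-harmonic with respect to the Sasaki metric. -/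
import Mathlib


/-- On a K-contact manifold of dimension `2m+1` (so `h = 0`, hence
`tr h² = 0`), the X-harmonicity criterion for the Reeb vector field with
respect to a Riemannian `g`-natural metric reads
`(tr h² + 2m)(α₁+α₁')(1) + [2m(α₁+α₃)+φ₁+φ₃]'(1) = 0`, which for `tr h² = 0`
reduces to `2m(α₁+α₁')(1) + [2m(α₁+α₃)+φ₁+φ₃]'(1) = 0`.  For the Sasaki metric
(`α₁ = 1`, `α₂ = α₃ = β₁ = β₂ = β₃ = 0`) the left-hand side equals `2m ≠ 0`:
the Reeb vector field of a K-contact manifold is never X-harmonic with respect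
to the Sasaki metric. -/
theorem reeb_never_Xharmonic_sasaki
    (m : ℕ) (hm : 1 ≤ m)
    (a1 a2 a3 b1 b2 b3 : ℝ → ℝ)
    (hS1 : a1 = fun _ => 1) (hS2 : a2 = fun _ => 0) (hS3 : a3 = fun _ => 0)
    (hS4 : b1 = fun _ => 0) (hS5 : b2 = fun _ => 0) (hS6 : b3 = fun _ => 0)
    (trh2 : ℝ) (hK : trh2 = 0)
    (XHarmonic : Prop)
    (hcrit : XHarmonic ↔
      (trh2 + 2 * (m : ℝ)) * (a1 1 + deriv a1 1)
        + deriv (fun t => 2 * (m : ℝ) * (a1 t + a3 t)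
            + ((a1 t + t * b1 t) + (a3 t + t * b3 t))) 1 = 0) :
    ((2 * (m : ℝ)) * (a1 1 + deriv a1 1)
        + deriv (fun t => 2 * (m : ℝ) * (a1 t + a3 t)
            + ((a1 t + t * b1 t) + (a3 t + t * b3 t))) 1 = 2 * (m : ℝ))
    ∧ ¬ XHarmonic := by
  subst hS1 hS2 hS3 hS4 hS5 hS6 hK
  have hd : deriv (fun t : ℝ => 2 * (m : ℝ) * ((1:ℝ) + 0)
      + ((1 + t * 0) + (0 + t * 0))) 1 = 0 := by
    simp
  have hd1 : deriv (fun _ : ℝ => (1:ℝ)) 1 = 0 := by simp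
  have key : (2 * (m : ℝ)) * (1 + deriv (fun _ : ℝ => (1:ℝ)) 1)
      + deriv (fun t : ℝ => 2 * (m : ℝ) * ((1:ℝ) + 0)
        + ((1 + t * 0) + (0 + t * 0))) 1 = 2 * (m : ℝ) := by
    rw [hd, hd1]; ring
  refine ⟨key, ?_⟩
  rw [hcrit]
  simp only [zero_add] at *
  rw [key]
  have : (0:ℝ) < 2 * (m:ℝ) := by positivity
  intro h
  rw [h] at this
  exact lt_irrefl 0 this
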